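/- Lower-bound family in the gain–concurrence plane: for the two-qubit state ρ_SA supported on span{|01⟩,|10⟩} with ⟨01|ρ|01⟩ = x, ⟨10|ρ|10⟩ = 1−x, ⟨01|ρ|10⟩ = C/2 (all real, with C ≤ 2√(x(1−x)), x ∈ [0,1]) and H_S = −σ_z, the daemonic gain satisfies δW = 2 − 2x − max{0, 2 − 4x}; minimizing over the two admissible values x = (1 ± √(1−C²))/2 gives δW = 1 − √(1−C²), where C is the concurrence of ρ_SA. -/

import Mathlib

open Matrix Kronecker BigOperators ComplexOrder

noncomputable section

/-- Partial trace over the second (ancilla) factor. -/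
def ptrA {d m : ℕ} (ρ : Matrix (Fin d × Fin m) (Fin d × Fin m) ℂ) :
    Matrix (Fin d) (Fin d) ℂ := fun i j => ∑ a, ρ (i, a) (j, a)

/-- Partial trace over the first (system) factor. -/
def ptrS {d m : ℕ} (ρ : Matrix (Fin d × Fin m) (Fin d × Fin m) ℂ) :
    Matrix (Fin m) (Fin m) ℂ := fun x y => ∑ i, ρ (i, x) (i, y)

/-- Probability of outcome corresponding to ancilla projector `P`. -/
def outcomeProb {d m : ℕ} (ρ : Matrix (Fin d × Fin m) (Fin d × Fin m) ℂ)
    (P : Matrix (Fin m) (Fin m) ℂ) : ℝ :=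
  ((((1 : Matrix (Fin d) (Fin d) ℂ)) ⊗ₖ P) * ρ).trace.re

/-- Normalized conditional state of the system after ancilla outcome `P`. -/
def condState {d m : ℕ} (ρ : Matrix (Fin d × Fin m) (Fin d × Fin m) ℂ)
    (P : Matrix (Fin m) (Fin m) ℂ) : Matrix (Fin d) (Fin d) ℂ :=
  (outcomeProb ρ P)⁻¹ •
    ptrA (((1 : Matrix (Fin d) (Fin d) ℂ) ⊗ₖ P) * ρ *
      ((1 : Matrix (Fin d) (Fin d) ℂ) ⊗ₖ P))

/-- Passive energy `∑ₖ rₖ εₖ`: decreasing eigenvalues of `σ` paired with the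
increasingly ordered energies `ε`. -/
def passiveEnergy {d : ℕ} (ε : Fin d → ℝ) (σ : Matrix (Fin d) (Fin d) ℂ) : ℝ :=
  if h : σ.IsHermitian then
    ∑ k, (h.eigenvalues ∘ (Tuple.sort h.eigenvalues)) k.rev * ε k
  else 0

/-- The daemonic gain `δW`: supremum over complete projective ancilla
measurements of `W_{Π} - W`. -/
def deltaW {d m : ℕ} (ε : Fin d → ℝ)
    (ρ : Matrix (Fin d × Fin m) (Fin d × Fin m) ℂ) : ℝ :=
  sSup {g : ℝ | ∃ (n : ℕ) (P : Fin n → Matrix (Fin m) (Fin m) ℂ),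
    (∀ a, (P a).IsHermitian) ∧ (∀ a b, P a * P b = if a = b then P a else 0) ∧
    (∑ a, P a = 1) ∧
    g = passiveEnergy ε (ptrA ρ) -
      ∑ a, outcomeProb ρ (P a) * passiveEnergy ε (condState ρ (P a))}

end

/-- The two-qubit state supported on span{|01⟩, |10⟩} with populations x, 1−x
and coherence C/2. -/
noncomputable def lowerState (x C : ℝ) :
    Matrix (Fin 2 × Fin 2) (Fin 2 × Fin 2) ℂ := fun p q =>
  if p = ((0 : Fin 2), (1 : Fin 2)) ∧ q = ((0 : Fin 2), (1 : Fin 2)) then (x : ℂ)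
  else if p = ((1 : Fin 2), (0 : Fin 2)) ∧ q = ((1 : Fin 2), (0 : Fin 2)) then
    ((1 - x : ℝ) : ℂ)
  else if (p = ((0 : Fin 2), (1 : Fin 2)) ∧ q = ((1 : Fin 2), (0 : Fin 2))) ∨
          (p = ((1 : Fin 2), (0 : Fin 2)) ∧ q = ((0 : Fin 2), (1 : Fin 2))) then
    ((C / 2 : ℝ) : ℂ)
  else 0

/-!
For any state `ρ` and any complete projective measurement on the ancilla, every conditional
system state is positive semidefinite, so its passive energy is at least `min ε` times its
trace; averaging with the outcome probabilities, which sum to `tr ρ = 1`, the post-measurement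
passive energy is at least `min ε = -1`. Hence `δW ≤ W + 1`, where `W` is the passive energy of
`ptrA ρ`. For `lowerState x C` the measurement in the ancilla's computational basis leaves the
system in the pure states `|1⟩` and `|0⟩` (with probabilities `1 - x` and `x`), which attains
this bound. Since `ptrA ρ = diag(x, 1 - x)` has `W = -|1 - 2x|`, this gives
`δW = 1 - |1 - 2x|`.
-/

namespace Matrix.IsHermitian

variable {σ : Matrix (Fin 2) (Fin 2) ℂ}

lemma re_trace_fin_two (hσ : σ.IsHermitian) :
    σ.trace.re = hσ.eigenvalues 0 + hσ.eigenvalues 1 := by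
  simp [hσ.trace_eq_sum_eigenvalues, Fin.sum_univ_two]

lemma re_det_fin_two (hσ : σ.IsHermitian) :
    σ.det.re = hσ.eigenvalues 0 * hσ.eigenvalues 1 := by
  simp [hσ.det_eq_prod_eigenvalues, Fin.prod_univ_two, ← Complex.ofReal_mul]

lemma posSemidef_of_trace_det_nonneg (hσ : σ.IsHermitian) (htr : 0 ≤ σ.trace.re)
    (hdet : 0 ≤ σ.det.re) : σ.PosSemidef := by
  rw [hσ.re_trace_fin_two] at htr
  rw [hσ.re_det_fin_two] at hdet
  rw [hσ.posSemidef_iff_eigenvalues_nonneg]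
  intro i
  fin_cases i
  · change 0 ≤ hσ.eigenvalues 0
    nlinarith
  · change 0 ≤ hσ.eigenvalues 1
    nlinarith

end Matrix.IsHermitian

lemma passiveEnergy_fin_two {σ : Matrix (Fin 2) (Fin 2) ℂ} (hσ : σ.IsHermitian) :
    passiveEnergy ![-1, 1] σ = -Real.sqrt (σ.trace.re ^ 2 - 4 * σ.det.re) := by
  set r := hσ.eigenvalues ∘ Tuple.sort hσ.eigenvalues
  have hr : r 0 ≤ r 1 := Tuple.monotone_sort hσ.eigenvalues (by decide)
  have hsum : r 0 + r 1 = σ.trace.re := by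
    rw [hσ.re_trace_fin_two, ← Fin.sum_univ_two r, ← Fin.sum_univ_two hσ.eigenvalues]
    exact Equiv.sum_comp (Tuple.sort hσ.eigenvalues) hσ.eigenvalues
  have hprod : r 0 * r 1 = σ.det.re := by
    rw [hσ.re_det_fin_two, ← Fin.prod_univ_two r, ← Fin.prod_univ_two hσ.eigenvalues]
    exact Equiv.prod_comp (Tuple.sort hσ.eigenvalues) hσ.eigenvalues
  have hgap : σ.trace.re ^ 2 - 4 * σ.det.re = (r 1 - r 0) ^ 2 := by
    rw [← hsum, ← hprod]; ring
  rw [passiveEnergy, dif_pos hσ, Fin.sum_univ_two, hgap, Real.sqrt_sq (sub_nonneg.2 hr)]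
  change r 1 * -1 + r 0 * 1 = -(r 1 - r 0)
  ring

lemma passiveEnergy_diagonal_fin_two (a b : ℝ) :
    passiveEnergy ![-1, 1] !![(a : ℂ), 0; 0, (b : ℂ)] = -|a - b| := by
  have hH : (!![(a : ℂ), 0; 0, (b : ℂ)]).IsHermitian := by
    ext i j
    fin_cases i <;> fin_cases j <;> simp
  rw [passiveEnergy_fin_two hH, Matrix.trace_fin_two_of, Matrix.det_fin_two_of, mul_zero,
    sub_zero, ← Complex.ofReal_add, ← Complex.ofReal_mul, Complex.ofReal_re, Complex.ofReal_re,
    ← Real.sqrt_sq_eq_abs]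
  ring_nf

lemma passiveEnergy_ge_mul_trace {d : ℕ} {ε : Fin d → ℝ} {e₀ : ℝ} (hε : ∀ k, e₀ ≤ ε k)
    {σ : Matrix (Fin d) (Fin d) ℂ} (hσ : σ.PosSemidef) :
    e₀ * σ.trace.re ≤ passiveEnergy ε σ := by
  let s := Tuple.sort hσ.1.eigenvalues
  have hsum : σ.trace.re = ∑ k, hσ.1.eigenvalues (s (Fin.revPerm k)) := by
    rw [Equiv.sum_comp Fin.revPerm (fun k => hσ.1.eigenvalues (s k)),
      Equiv.sum_comp s hσ.1.eigenvalues, hσ.1.trace_eq_sum_eigenvalues, Complex.re_sum]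
    rfl
  rw [passiveEnergy, dif_pos hσ.1, hsum, Finset.mul_sum]
  refine Finset.sum_le_sum fun k _ => ?_
  rw [mul_comm]
  exact mul_le_mul_of_nonneg_left (hε k) (hσ.eigenvalues_nonneg _)

section PartialTrace

variable {d m : ℕ}

def tensorAncillaKet (d : ℕ) {m : ℕ} (a : Fin m) : Matrix (Fin d × Fin m) (Fin d) ℂ :=
  fun p j => if p = (j, a) then 1 else 0

lemma trace_ptrA (ρ : Matrix (Fin d × Fin m) (Fin d × Fin m) ℂ) :
    (ptrA ρ).trace = ρ.trace := by
  simp [ptrA, Matrix.trace, Fintype.sum_prod_type]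

lemma ptrA_eq_sum (ρ : Matrix (Fin d × Fin m) (Fin d × Fin m) ℂ) :
    ptrA ρ = ∑ a, ((tensorAncillaKet d a)ᴴ : Matrix (Fin d) (Fin d × Fin m) ℂ) * ρ *
      tensorAncillaKet d a := by
  ext i j
  simp [ptrA, tensorAncillaKet, Matrix.sum_apply, Matrix.mul_apply, Matrix.conjTranspose_apply]

lemma Matrix.PosSemidef.ptrA {ρ : Matrix (Fin d × Fin m) (Fin d × Fin m) ℂ}
    (hρ : ρ.PosSemidef) : (ptrA ρ).PosSemidef := by
  rw [ptrA_eq_sum]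
  exact Matrix.posSemidef_sum _ fun a _ => hρ.conjTranspose_mul_mul_same _

end PartialTrace

structure IsProjectiveMeasurement {m n : ℕ} (P : Fin n → Matrix (Fin m) (Fin m) ℂ) :
    Prop where
  isHermitian : ∀ a, (P a).IsHermitian
  mul_eq : ∀ a b, P a * P b = if a = b then P a else 0
  sum_eq_one : ∑ a, P a = 1

lemma IsProjectiveMeasurement.mul_self {m n : ℕ} {P : Fin n → Matrix (Fin m) (Fin m) ℂ}
    (hP : IsProjectiveMeasurement P) (a : Fin n) : P a * P a = P a := by
  simpa using hP.mul_eq a a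

lemma isProjectiveMeasurement_single (m : ℕ) :
    IsProjectiveMeasurement fun a : Fin m => Matrix.single a a (1 : ℂ) where
  isHermitian a := by simp [Matrix.IsHermitian, Matrix.conjTranspose_single]
  mul_eq a b := by
    split_ifs with hab
    · subst hab; simp
    · simp [hab]
  sum_eq_one := Matrix.sum_single_one

section Measurement

variable {d m : ℕ} (ρ : Matrix (Fin d × Fin m) (Fin d × Fin m) ℂ)

lemma outcomeProb_eq_re_trace_ptrA {P : Matrix (Fin m) (Fin m) ℂ} (hP : P * P = P) :
    outcomeProb ρ P = (ptrA ((1 ⊗ₖ P) * ρ * (1 ⊗ₖ P))).trace.re := by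
  rw [trace_ptrA, Matrix.trace_mul_cycle, ← Matrix.mul_kronecker_mul, one_mul, hP, outcomeProb]

variable {ρ}

lemma posSemidef_ptrA_conj (hρ : ρ.PosSemidef) {P : Matrix (Fin m) (Fin m) ℂ}
    (hP : P.IsHermitian) : (ptrA ((1 ⊗ₖ P) * ρ * (1 ⊗ₖ P))).PosSemidef := by
  have hK : ((1 : Matrix (Fin d) (Fin d) ℂ) ⊗ₖ P)ᴴ = 1 ⊗ₖ P := by
    rw [Matrix.conjTranspose_kronecker, Matrix.conjTranspose_one, hP.eq]
  have := hρ.conjTranspose_mul_mul_same ((1 : Matrix (Fin d) (Fin d) ℂ) ⊗ₖ P)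
  rw [hK] at this
  exact this.ptrA

lemma outcomeProb_nonneg (hρ : ρ.PosSemidef) {P : Matrix (Fin m) (Fin m) ℂ}
    (hP : P.IsHermitian) (hPP : P * P = P) : 0 ≤ outcomeProb ρ P := by
  rw [outcomeProb_eq_re_trace_ptrA ρ hPP]
  exact (Complex.nonneg_iff.1 (posSemidef_ptrA_conj hρ hP).trace_nonneg).1

lemma posSemidef_condState (hρ : ρ.PosSemidef) {P : Matrix (Fin m) (Fin m) ℂ}
    (hP : P.IsHermitian) (hPP : P * P = P) : (condState ρ P).PosSemidef :=
  (posSemidef_ptrA_conj hρ hP).smul (inv_nonneg.2 (outcomeProb_nonneg hρ hP hPP))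

lemma re_trace_condState {P : Matrix (Fin m) (Fin m) ℂ} (hPP : P * P = P) :
    (condState ρ P).trace.re = (outcomeProb ρ P)⁻¹ * outcomeProb ρ P := by
  rw [condState, Matrix.trace_smul, Complex.real_smul, Complex.re_ofReal_mul,
    ← outcomeProb_eq_re_trace_ptrA ρ hPP]

lemma sum_outcomeProb {n : ℕ} {P : Fin n → Matrix (Fin m) (Fin m) ℂ} (hP : ∑ a, P a = 1) :
    ∑ a, outcomeProb ρ (P a) = ρ.trace.re := by
  have hK : ∑ a, (1 : Matrix (Fin d) (Fin d) ℂ) ⊗ₖ P a = 1 ⊗ₖ ∑ a, P a := by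
    ext
    simp [Matrix.sum_apply, Finset.mul_sum]
  rw [hP, Matrix.one_kronecker_one] at hK
  simp only [outcomeProb, ← Complex.re_sum, ← Matrix.trace_sum, ← Finset.sum_mul, hK, one_mul]

end Measurement

section DaemonicGain

variable {d m : ℕ} {ε : Fin d → ℝ} {e₀ : ℝ} {ρ : Matrix (Fin d × Fin m) (Fin d × Fin m) ℂ}

lemma mul_le_outcomeProb_mul_passiveEnergy (hε : ∀ k, e₀ ≤ ε k) (hρ : ρ.PosSemidef)
    {P : Matrix (Fin m) (Fin m) ℂ} (hP : P.IsHermitian) (hPP : P * P = P) :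
    e₀ * outcomeProb ρ P ≤ outcomeProb ρ P * passiveEnergy ε (condState ρ P) := by
  set p := outcomeProb ρ P
  -- `p * p⁻¹ * p = p` holds also for an outcome of probability `p = 0`.
  calc e₀ * p = e₀ * (p * p⁻¹ * p) := by rw [mul_inv_mul_cancel]
    _ = p * (e₀ * (p⁻¹ * p)) := by ring
    _ = p * (e₀ * (condState ρ P).trace.re) := by rw [re_trace_condState hPP]
    _ ≤ p * passiveEnergy ε (condState ρ P) :=
      mul_le_mul_of_nonneg_left
        (passiveEnergy_ge_mul_trace hε (posSemidef_condState hρ hP hPP))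
        (outcomeProb_nonneg hρ hP hPP)

lemma le_sum_outcomeProb_mul_passiveEnergy (hε : ∀ k, e₀ ≤ ε k) (hρ : ρ.PosSemidef)
    (hρ₁ : ρ.trace = 1) {n : ℕ} {P : Fin n → Matrix (Fin m) (Fin m) ℂ}
    (hP : IsProjectiveMeasurement P) :
    e₀ ≤ ∑ a, outcomeProb ρ (P a) * passiveEnergy ε (condState ρ (P a)) :=
  calc e₀ = ∑ a, e₀ * outcomeProb ρ (P a) := by
        rw [← Finset.mul_sum, sum_outcomeProb hP.sum_eq_one, hρ₁, Complex.one_re, mul_one]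
    _ ≤ _ := Finset.sum_le_sum fun a _ =>
        mul_le_outcomeProb_mul_passiveEnergy hε hρ (hP.isHermitian a) (hP.mul_self a)

lemma deltaW_eq_of_sum_eq (hε : ∀ k, e₀ ≤ ε k) (hρ : ρ.PosSemidef) (hρ₁ : ρ.trace = 1)
    {n : ℕ} {P : Fin n → Matrix (Fin m) (Fin m) ℂ} (hP : IsProjectiveMeasurement P)
    (hPe₀ : ∑ a, outcomeProb ρ (P a) * passiveEnergy ε (condState ρ (P a)) = e₀) :
    deltaW ε ρ = passiveEnergy ε (ptrA ρ) - e₀ := by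
  refine IsGreatest.csSup_eq ⟨⟨n, P, hP.1, hP.2, hP.3, by rw [hPe₀]⟩, ?_⟩
  rintro g ⟨n', Q, hQH, hQQ, hQ₁, rfl⟩
  linarith [le_sum_outcomeProb_mul_passiveEnergy hε hρ hρ₁ ⟨hQH, hQQ, hQ₁⟩]

end DaemonicGain

lemma ptrA_conj_single {d m : ℕ} (ρ : Matrix (Fin d × Fin m) (Fin d × Fin m) ℂ) (a : Fin m) :
    ptrA ((1 ⊗ₖ Matrix.single a a 1) * ρ * (1 ⊗ₖ Matrix.single a a 1)) =
      Matrix.of fun i j => ρ (i, a) (j, a) := by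
  ext i j
  simp [ptrA, Matrix.mul_apply, Matrix.single, Matrix.one_apply, Fintype.sum_prod_type, ite_and,
    Finset.sum_ite_eq, Finset.sum_ite_eq']

lemma outcomeProb_mul_passiveEnergy_condState_single {m : ℕ}
    {ρ : Matrix (Fin 2 × Fin m) (Fin 2 × Fin m) ℂ} {a : Fin m} {p q : ℝ}
    (hblock : Matrix.of (fun i j => ρ (i, a) (j, a)) = !![(p : ℂ), 0; 0, (q : ℂ)])
    (hp : 0 ≤ p) (hq : 0 ≤ q) :
    outcomeProb ρ (Matrix.single a a 1) *
      passiveEnergy ![-1, 1] (condState ρ (Matrix.single a a 1)) = -|p - q| := by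
  have hprob : outcomeProb ρ (Matrix.single a a 1) = p + q := by
    rw [outcomeProb_eq_re_trace_ptrA ρ ((isProjectiveMeasurement_single m).mul_self a),
      ptrA_conj_single, hblock, Matrix.trace_fin_two]
    simp
  have hcond : condState ρ (Matrix.single a a 1) =
      !![(((p + q)⁻¹ * p : ℝ) : ℂ), 0; 0, (((p + q)⁻¹ * q : ℝ) : ℂ)] := by
    rw [condState, hprob, ptrA_conj_single, hblock]
    ext i j
    fin_cases i <;> fin_cases j <;> simp
  rw [hprob, hcond, passiveEnergy_diagonal_fin_two, ← mul_sub, abs_mul, abs_inv,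
    abs_of_nonneg (add_nonneg hp hq)]
  rcases (add_nonneg hp hq).eq_or_lt with hpq | hpq
  · obtain ⟨rfl, rfl⟩ : p = 0 ∧ q = 0 := ⟨by linarith, by linarith⟩
    simp
  · field_simp

/-- Coordinates in the basis `|01⟩, |10⟩` of the odd-parity subspace. -/
def oddParityCoords : Matrix (Fin 2) (Fin 2 × Fin 2) ℂ :=
  Matrix.of fun k p => if p = (k, k.rev) then 1 else 0

section LowerState

variable {x C : ℝ}

lemma lowerState_eq_conj :
    lowerState x C = oddParityCoordsᴴ *
      !![(x : ℂ), ((C / 2 : ℝ) : ℂ); ((C / 2 : ℝ) : ℂ), ((1 - x : ℝ) : ℂ)] * oddParityCoords := by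
  ext ⟨i, a⟩ ⟨j, b⟩
  fin_cases i <;> fin_cases a <;> fin_cases j <;> fin_cases b <;>
    simp [lowerState, oddParityCoords, Matrix.mul_apply, Fin.sum_univ_two]

lemma lowerState_posSemidef (hx₀ : 0 ≤ x) (hx₁ : x ≤ 1) (hC₀ : 0 ≤ C)
    (hC : C ≤ 2 * Real.sqrt (x * (1 - x))) : (lowerState x C).PosSemidef := by
  have hC2 : C ^ 2 ≤ 4 * (x * (1 - x)) := by
    nlinarith [Real.sq_sqrt (mul_nonneg hx₀ (sub_nonneg.2 hx₁))]
  have hH :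
      (!![(x : ℂ), ((C / 2 : ℝ) : ℂ); ((C / 2 : ℝ) : ℂ), ((1 - x : ℝ) : ℂ)]).IsHermitian := by
    ext i j
    fin_cases i <;> fin_cases j <;> simp
  rw [lowerState_eq_conj]
  refine (hH.posSemidef_of_trace_det_nonneg ?_ ?_).conjTranspose_mul_mul_same _
  · rw [Matrix.trace_fin_two_of, ← Complex.ofReal_add, Complex.ofReal_re]
    linarith
  · rw [Matrix.det_fin_two_of, ← Complex.ofReal_mul, ← Complex.ofReal_mul,
      ← Complex.ofReal_sub, Complex.ofReal_re]
    nlinarith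

lemma trace_lowerState : (lowerState x C).trace = 1 := by
  simp [Matrix.trace, Fintype.sum_prod_type, Fin.sum_univ_two, lowerState]

lemma ptrA_lowerState : ptrA (lowerState x C) = !![(x : ℂ), 0; 0, ((1 - x : ℝ) : ℂ)] := by
  ext i j
  fin_cases i <;> fin_cases j <;> simp [ptrA, lowerState, Fin.sum_univ_two]

end LowerState

lemma deltaW_lowerState {x C : ℝ} (hx₀ : 0 ≤ x) (hx₁ : x ≤ 1) (hC₀ : 0 ≤ C)
    (hC : C ≤ 2 * Real.sqrt (x * (1 - x))) :
    deltaW ![-1, 1] (lowerState x C) = 1 - |1 - 2 * x| := by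
  have hε : ∀ k, (-1 : ℝ) ≤ ![-1, 1] k := by
    intro k; fin_cases k <;> norm_num
  have hblock₀ : Matrix.of (fun i j => lowerState x C (i, 0) (j, 0)) =
      !![((0 : ℝ) : ℂ), 0; 0, ((1 - x : ℝ) : ℂ)] := by
    ext i j; fin_cases i <;> fin_cases j <;> simp [lowerState]
  have hblock₁ : Matrix.of (fun i j => lowerState x C (i, 1) (j, 1)) =
      !![(x : ℂ), 0; 0, ((0 : ℝ) : ℂ)] := by
    ext i j; fin_cases i <;> fin_cases j <;> simp [lowerState]
  have hbasis : ∑ a, outcomeProb (lowerState x C) (Matrix.single a a 1) *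
      passiveEnergy ![-1, 1] (condState (lowerState x C) (Matrix.single a a 1)) = -1 := by
    rw [Fin.sum_univ_two,
      outcomeProb_mul_passiveEnergy_condState_single hblock₀ le_rfl (by linarith),
      outcomeProb_mul_passiveEnergy_condState_single hblock₁ hx₀ le_rfl,
      zero_sub, abs_neg, abs_of_nonneg (by linarith), sub_zero, abs_of_nonneg hx₀]
    ring
  rw [deltaW_eq_of_sum_eq hε (lowerState_posSemidef hx₀ hx₁ hC₀ hC) trace_lowerState
    (isProjectiveMeasurement_single 2) hbasis, ptrA_lowerState,
    passiveEnergy_diagonal_fin_two, show x - (1 - x) = -(1 - 2 * x) by ring, abs_neg]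
  ring

/-- for the state supported on span{|01⟩,|10⟩} with populations
x, 1−x and coherence C/2, and H_S = −σ_z, the daemonic gain is
δW = 2 − 2x − max{0, 2 − 4x}; for the admissible extremal values
x = (1 ± √(1−C²))/2 this gives δW = 1 − √(1−C²), where C is the
concurrence. -/
theorem lowerState_daemonic_gain (x C : ℝ)
    (hx0 : 0 ≤ x) (hx1 : x ≤ 1) (hC0 : 0 ≤ C)
    (hC : C ≤ 2 * Real.sqrt (x * (1 - x))) :
    deltaW ![(-1 : ℝ), 1] (lowerState x C) = 2 - 2 * x - max 0 (2 - 4 * x) ∧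
    ((x = (1 + Real.sqrt (1 - C ^ 2)) / 2 ∨ x = (1 - Real.sqrt (1 - C ^ 2)) / 2) →
      deltaW ![(-1 : ℝ), 1] (lowerState x C) = 1 - Real.sqrt (1 - C ^ 2)) := by
  rw [deltaW_lowerState hx0 hx1 hC0 hC]
  refine ⟨?_, ?_⟩
  · rcases le_total x (1 / 2) with hx | hx
    · rw [abs_of_nonneg (by linarith), max_eq_right (by linarith)]
      ring
    · rw [abs_of_nonpos (by linarith), max_eq_left (by linarith)]
      ring
  · have hs := Real.sqrt_nonneg (1 - C ^ 2)
    rintro (rfl | rfl)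
    · rw [show 1 - 2 * ((1 + √(1 - C ^ 2)) / 2) = -√(1 - C ^ 2) by ring, abs_neg,
        abs_of_nonneg hs]
    · rw [show 1 - 2 * ((1 - √(1 - C ^ 2)) / 2) = √(1 - C ^ 2) by ring, abs_of_nonneg hs]
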